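/- For a topological group G the following are equivalent: (1) every continuous action of G on a nonempty compact convex subset K of a Hausdorff locally convex real topological vector space in which each g ∈ G acts by an affine map has a fixed point; (2) every continuous action of G on a nonempty compact Hausdorff space admits an invariant regular Borel probability measure. -/

import Mathlib

/-!
(2) ⇒ (1): a probability measure `μ` on the compact convex set `K` has a barycenter `b`, a point
at which every continuous affine function takes its `μ`-mean; by compactness it suffices to treat
finitely many affine functions at once, and then `b` exists because `ℝⁿ`-valued integrals stay in
closed convex sets. If `g` acts affinely and preserves `μ`, then
`ℓ (g • b) = ∫ ℓ ∘ g dμ = ∫ ℓ dμ = ℓ b` for every continuous linear `ℓ`, so `g • b = b` by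
Hahn–Banach.

(1) ⇒ (2): `G` acts affinely on the weak-* compact convex set of states of `C(X, ℝ)` by
`φ ↦ φ ∘ (· ∘ (g • ·))`; the action is jointly continuous because states have norm one.
A fixed state is integration against a regular probability measure (Riesz–Markov–Kakutani),
and that measure is invariant since regular measures are determined by the integrals of
continuous functions.
-/

open MeasureTheory Set

section Barycenter

variable {E : Type*} [AddCommGroup E] [Module ℝ E] {K : Set E}

/-- Affineness of a map on a convex set `K`, phrased through the ambient point `z` so that no
membership proof of the convex combination is needed. -/
def PreservesConvexComb {F : Type*} [AddCommGroup F] [Module ℝ F] (f : K → F) : Prop :=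
  ∀ (x y z : K) (t : ℝ), 0 ≤ t → t ≤ 1 → (z : E) = t • (x : E) + (1 - t) • (y : E) →
    f z = t • f x + (1 - t) • f y

theorem preservesConvexComb_subtypeVal : PreservesConvexComb (Subtype.val : K → E) :=
  fun _ _ _ _ _ _ h => h

theorem PreservesConvexComb.comp_linearMap {F F' : Type*} [AddCommGroup F] [Module ℝ F]
    [AddCommGroup F'] [Module ℝ F'] {f : K → F} (hf : PreservesConvexComb f) (ℓ : F →ₗ[ℝ] F') :
    PreservesConvexComb (ℓ ∘ f) := by
  intro x y z t ht0 ht1 hz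
  simp [hf x y z t ht0 ht1 hz]

theorem PreservesConvexComb.pi {ι : Type*} {f : ι → K → ℝ}
    (hf : ∀ i, PreservesConvexComb (f i)) : PreservesConvexComb fun x i => f i x := by
  intro x y z t ht0 ht1 hz
  ext i
  simpa using hf i x y z t ht0 ht1 hz

theorem PreservesConvexComb.convex_range {F : Type*} [AddCommGroup F] [Module ℝ F]
    (hK : Convex ℝ K) {f : K → F} (hf : PreservesConvexComb f) : Convex ℝ (range f) := by
  rintro _ ⟨x, rfl⟩ _ ⟨y, rfl⟩ a b ha hb hab
  obtain rfl : b = 1 - a := by linarith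
  exact ⟨⟨_, hK x.2 y.2 ha hb hab⟩, hf x y _ a ha (by linarith) rfl⟩

variable [TopologicalSpace E] [MeasurableSpace K]

def IsBarycenter (μ : Measure K) (b : K) : Prop :=
  ∀ f : K → ℝ, Continuous f → PreservesConvexComb f → f b = ∫ x, f x ∂μ

theorem IsBarycenter.apply_eq_self_of_map_eq [IsTopologicalAddGroup E] [ContinuousSMul ℝ E]
    [T2Space E] [LocallyConvexSpace ℝ E] [BorelSpace K] {μ : Measure K} {b : K}
    (hb : IsBarycenter μ b) {T : K → K} (hTc : Continuous T)
    (hTa : PreservesConvexComb fun x => (T x : E)) (hμ : μ.map T = μ) : T b = b := by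
  refine Subtype.ext <| (SeparatingDual.eq_iff_forall_dual_eq (R := ℝ)).2 fun ℓ => ?_
  have hℓc : Continuous fun x : K => ℓ x := ℓ.continuous.comp continuous_subtype_val
  calc ℓ (T b) = ∫ x, ℓ (T x) ∂μ :=
        hb _ (hℓc.comp hTc) (hTa.comp_linearMap ℓ.toLinearMap)
    _ = ∫ x, ℓ x ∂(μ.map T) := (integral_map hTc.aemeasurable hℓc.aestronglyMeasurable).symm
    _ = ℓ b := by rw [hμ, hb _ hℓc (preservesConvexComb_subtypeVal.comp_linearMap ℓ.toLinearMap)]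

variable [OpensMeasurableSpace K] [CompactSpace K] (μ : Measure K) [IsProbabilityMeasure μ]

theorem exists_forall_eq_integral_of_finite (hK : Convex ℝ K) {ι : Type*} [Fintype ι]
    {f : ι → K → ℝ} (hfc : ∀ i, Continuous (f i)) (hfa : ∀ i, PreservesConvexComb (f i)) :
    ∃ b : K, ∀ i, f i b = ∫ x, f i x ∂μ := by
  set T : K → ι → ℝ := fun x i => f i x
  have hTc : Continuous T := continuous_pi hfc
  have hint : ∀ i, Integrable (f i) μ := fun i =>
    (hfc i).integrable_of_hasCompactSupport (HasCompactSupport.of_compactSpace _)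
  obtain ⟨b, hb⟩ : ∫ x, T x ∂μ ∈ range T :=
    ((PreservesConvexComb.pi hfa).convex_range hK).integral_mem
      (isCompact_range hTc).isClosed (ae_of_all _ mem_range_self) (Integrable.of_eval hint)
  exact ⟨b, fun i => (congrFun hb i).trans (eval_integral hint i)⟩

theorem exists_isBarycenter (hK : Convex ℝ K) : ∃ b, IsBarycenter μ b := by
  let ι := {f : K → ℝ // Continuous f ∧ PreservesConvexComb f}
  obtain ⟨b, -, hb⟩ := isCompact_univ.inter_iInter_nonempty
    (fun f : ι => {x | f.1 x = ∫ y, f.1 y ∂μ}) (fun f => isClosed_eq f.2.1 continuous_const)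
    fun u => by
      obtain ⟨b, hb⟩ := exists_forall_eq_integral_of_finite μ hK
        (f := fun f : u => f.1.1) (fun f => f.1.2.1) fun f => f.1.2.2
      exact ⟨b, mem_univ b, mem_iInter₂.2 fun f hf => hb ⟨f, hf⟩⟩
  exact ⟨b, fun f hfc hfa => mem_iInter.1 hb ⟨f, hfc, hfa⟩⟩

end Barycenter

namespace WeakDual

variable {𝕜 E F : Type*}

noncomputable def transpose [CommSemiring 𝕜] [TopologicalSpace 𝕜] [ContinuousAdd 𝕜]
    [ContinuousConstSMul 𝕜 𝕜] [AddCommMonoid E] [TopologicalSpace E] [Module 𝕜 E]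
    [AddCommMonoid F] [TopologicalSpace F] [Module 𝕜 F] (T : E →L[𝕜] F) :
    WeakDual 𝕜 F →L[𝕜] WeakDual 𝕜 E where
  toFun φ := StrongDual.toWeakDual ((toStrongDual φ).comp T)
  map_add' _ _ := rfl
  map_smul' _ _ := rfl
  cont := continuous_of_continuous_eval fun v => eval_continuous (T v)

theorem continuousOn_apply_of_norm_le [NontriviallyNormedField 𝕜] [SeminormedAddCommGroup E]
    [NormedSpace 𝕜 E] (C : ℝ) :
    ContinuousOn (fun p : E × WeakDual 𝕜 E => p.2 p.1) {p | ‖toStrongDual p.2‖ ≤ C} := by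
  rintro ⟨v₀, φ₀⟩ -
  have hsmall : Filter.Tendsto (fun p : E × WeakDual 𝕜 E => p.2 (p.1 - v₀))
      (nhdsWithin (v₀, φ₀) {p | ‖toStrongDual p.2‖ ≤ C}) (nhds 0) := by
    refine squeeze_zero_norm' (a := fun p => C * ‖p.1 - v₀‖) ?_ ?_
    · filter_upwards [self_mem_nhdsWithin] with p hp
      exact ((toStrongDual p.2).le_opNorm _).trans
        (mul_le_mul_of_nonneg_right hp (norm_nonneg _))
    · have : Continuous fun p : E × WeakDual 𝕜 E => C * ‖p.1 - v₀‖ := by fun_prop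
      simpa using (this.tendsto (v₀, φ₀)).mono_left nhdsWithin_le_nhds
  have hbase : Filter.Tendsto (fun p : E × WeakDual 𝕜 E => p.2 v₀)
      (nhdsWithin (v₀, φ₀) {p | ‖toStrongDual p.2‖ ≤ C}) (nhds (φ₀ v₀)) :=
    ((eval_continuous v₀).comp continuous_snd).continuousWithinAt
  have := hsmall.add hbase
  simp only [map_sub, sub_add_cancel, zero_add] at this
  exact this

end WeakDual

section States

variable (X : Type*) [TopologicalSpace X]

/-- By Riesz–Markov–Kakutani, the regular Borel probability measures on a compact Hausdorff `X`. -/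
def stateSpace : Set (WeakDual ℝ C(X, ℝ)) := {φ | φ 1 = 1 ∧ ∀ f, 0 ≤ f → 0 ≤ φ f}

theorem convex_stateSpace : Convex ℝ (stateSpace X) := by
  rintro φ ⟨hφ1, hφ⟩ ψ ⟨hψ1, hψ⟩ a b ha hb hab
  refine ⟨?_, fun f hf => ?_⟩
  · change a * φ 1 + b * ψ 1 = 1
    rw [hφ1, hψ1, mul_one, mul_one, hab]
  · change 0 ≤ a * φ f + b * ψ f
    have := hφ f hf
    have := hψ f hf
    positivity

theorem isClosed_stateSpace : IsClosed (stateSpace X) := by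
  simp only [stateSpace, ofPred_and, ofPred_forall]
  exact (isClosed_eq (WeakDual.eval_continuous 1) continuous_const).inter <|
    isClosed_iInter fun f => isClosed_iInter fun _ =>
      isClosed_le continuous_const (WeakDual.eval_continuous f)

variable {X} in
theorem evalCLM_mem_stateSpace (x : X) :
    StrongDual.toWeakDual (ContinuousMap.evalCLM ℝ x) ∈ stateSpace X :=
  ⟨rfl, fun _ hf => hf x⟩

variable {X} [CompactSpace X]

theorem norm_le_one_of_mem_stateSpace {φ : WeakDual ℝ C(X, ℝ)} (hφ : φ ∈ stateSpace X) :
    ‖WeakDual.toStrongDual φ‖ ≤ 1 := by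
  refine ContinuousLinearMap.opNorm_le_bound _ zero_le_one fun f => ?_
  have hle : ∀ g : C(X, ℝ), g ≤ ‖f‖ • 1 → φ g ≤ ‖f‖ := fun g hg => by
    have := hφ.2 _ (sub_nonneg.2 hg)
    rw [map_sub, map_smul, hφ.1, smul_eq_mul, mul_one, sub_nonneg] at this
    exact this
  rw [one_mul, Real.norm_eq_abs, abs_le]
  have hf : ∀ x, |f x| ≤ ‖f‖ := f.norm_coe_le_norm
  constructor
  · have := hle (-f) fun x => by simpa [neg_le] using (abs_le.1 (hf x)).1
    rw [map_neg] at this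
    exact neg_le.1 this
  · exact hle f fun x => by simpa using (abs_le.1 (hf x)).2

variable (X) in
theorem isCompact_stateSpace : IsCompact (stateSpace X) :=
  WeakDual.isCompact_of_bounded_of_closed
    ((WeakDual.isBounded_closedBall 0 1).subset fun _ hφ => by
      simpa using norm_le_one_of_mem_stateSpace hφ)
    (isClosed_stateSpace X)

end States

noncomputable def ContinuousMap.compRightCLM {X Y : Type*} [TopologicalSpace X]
    [TopologicalSpace Y] (ψ : C(X, Y)) : C(Y, ℝ) →L[ℝ] C(X, ℝ) :=
  ⟨(compRightAlgHom ℝ ℝ ψ).toLinearMap, compRightAlgHom_continuous ℝ ℝ ψ⟩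

@[simp]
theorem ContinuousMap.compRightCLM_apply {X Y : Type*} [TopologicalSpace X]
    [TopologicalSpace Y] (ψ : C(X, Y)) (f : C(Y, ℝ)) : compRightCLM ψ f = f.comp ψ := rfl

theorem mapsTo_transpose_compRightCLM {X Y : Type*} [TopologicalSpace X] [TopologicalSpace Y]
    (ψ : C(X, Y)) :
    MapsTo (WeakDual.transpose (ContinuousMap.compRightCLM ψ)) (stateSpace X) (stateSpace Y) :=
  fun _ hφ => ⟨hφ.1, fun _ hf => hφ.2 _ fun x => hf (ψ x)⟩

section Action

variable {G X : Type*} [Group G] [TopologicalSpace X] [MulAction G X] [ContinuousConstSMul G X]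

variable (X) in
noncomputable def dualSMul (g : G) : WeakDual ℝ C(X, ℝ) →L[ℝ] WeakDual ℝ C(X, ℝ) :=
  WeakDual.transpose (ContinuousMap.compRightCLM (Homeomorph.smul g : X ≃ₜ X))

theorem dualSMul_one (φ : WeakDual ℝ C(X, ℝ)) : dualSMul X (1 : G) φ = φ :=
  DFunLike.ext _ _ fun f => congrArg φ (ContinuousMap.ext fun x => by simp)

theorem dualSMul_mul (g h : G) (φ : WeakDual ℝ C(X, ℝ)) :
    dualSMul X (g * h) φ = dualSMul X g (dualSMul X h φ) :=
  DFunLike.ext _ _ fun f => congrArg φ (ContinuousMap.ext fun x => by simp [mul_smul])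

theorem mapsTo_dualSMul (g : G) : MapsTo (dualSMul X g) (stateSpace X) (stateSpace X) :=
  mapsTo_transpose_compRightCLM _

theorem continuous_dualSMul [TopologicalSpace G] [CompactSpace X] [ContinuousSMul G X] :
    Continuous fun p : G × stateSpace X => dualSMul X p.1 p.2 := by
  refine WeakDual.continuous_of_continuous_eval fun f => ?_
  have hcomp : Continuous fun g : G => f.comp ((Homeomorph.smul g : X ≃ₜ X) : C(X, X)) :=
    (ContinuousMap.curry (⟨fun q : G × X => f (q.1 • q.2), by fun_prop⟩ : C(G × X, ℝ))).continuous
  exact (WeakDual.continuousOn_apply_of_norm_le 1).comp_continuous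
    ((hcomp.comp continuous_fst).prodMk (continuous_subtype_val.comp continuous_snd))
    fun p => norm_le_one_of_mem_stateSpace p.2.2

end Action

section Riesz

open scoped CompactlySupported

variable {X : Type*} [TopologicalSpace X] [CompactSpace X] [T2Space X] [MeasurableSpace X]
  [BorelSpace X]

theorem exists_regular_probability_integral_eq {φ : WeakDual ℝ C(X, ℝ)}
    (hφ : φ ∈ stateSpace X) :
    ∃ μ : Measure X, IsProbabilityMeasure μ ∧ μ.Regular ∧ ∀ f : C(X, ℝ), ∫ x, f x ∂μ = φ f := by
  let Λ : C_c(X, ℝ) →ₚ[ℝ] ℝ := PositiveLinearMap.mk₀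
    ⟨⟨fun f => φ (f : C(X, ℝ)), fun f g => map_add φ (f : C(X, ℝ)) g⟩,
      fun c f => map_smul φ c (f : C(X, ℝ))⟩
    fun f hf => hφ.2 f hf
  have hint (f : C(X, ℝ)) : ∫ x, f x ∂(RealRMK.rieszMeasure Λ) = φ f :=
    RealRMK.integral_rieszMeasure Λ (CompactlySupportedContinuousMap.continuousMapEquiv f)
  refine ⟨RealRMK.rieszMeasure Λ, ⟨?_⟩, inferInstance, hint⟩
  exact (ENNReal.toReal_eq_one_iff _).1 (by simpa [hφ.1, measureReal_def] using hint 1)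

theorem MeasureTheory.Measure.map_eq_self_of_integral_comp_eq {μ : Measure X} [μ.Regular]
    (T : X ≃ₜ X) (h : ∀ f : C(X, ℝ), ∫ x, f (T x) ∂μ = ∫ x, f x ∂μ) : μ.map T = μ := by
  have := Measure.Regular.map (μ := μ) T
  refine Measure.ext_of_integral_eq_on_compactlySupported fun f => ?_
  rw [show μ.map T = μ.map T.toMeasurableEquiv from rfl, integral_map_equiv]
  exact h f

end Riesz

def AffineFixedPointProperty (G : Type) [Group G] [TopologicalSpace G] : Prop :=
  ∀ (E : Type) [AddCommGroup E] [Module ℝ E] [TopologicalSpace E]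
    [IsTopologicalAddGroup E] [ContinuousSMul ℝ E] [T2Space E] [LocallyConvexSpace ℝ E]
    (K : Set E), IsCompact K → ∀ hKconv : Convex ℝ K, K.Nonempty →
    ∀ act : G → K → K,
      (∀ x, act 1 x = x) →
      (∀ g h x, act (g * h) x = act g (act h x)) →
      (Continuous fun p : G × K => act p.1 p.2) →
      (∀ (g : G) (x y : K) (t : ℝ) (ht0 : 0 ≤ t) (ht1 : t ≤ 1),
        (act g ⟨t • (x : E) + (1 - t) • (y : E),
            hKconv x.2 y.2 ht0 (by linarith) (by ring)⟩ : E)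
          = t • (act g x : E) + (1 - t) • (act g y : E)) →
      ∃ x : K, ∀ g : G, act g x = x

def InvariantMeasureProperty (G : Type) [Group G] [TopologicalSpace G] : Prop :=
  ∀ (X : Type) [TopologicalSpace X] [CompactSpace X] [T2Space X] [Nonempty X]
    [MeasurableSpace X] [BorelSpace X],
    ∀ act : G → X → X,
      (∀ x, act 1 x = x) →
      (∀ g h x, act (g * h) x = act g (act h x)) →
      (Continuous fun p : G × X => act p.1 p.2) →
      ∃ μ : Measure X, IsProbabilityMeasure μ ∧ μ.Regular ∧
        ∀ (g : G) (B : Set X), MeasurableSet B → μ (act g ⁻¹' B) = μ B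

section

variable {G : Type} [Group G] [TopologicalSpace G]

theorem AffineFixedPointProperty.exists_fixed_state (hG : AffineFixedPointProperty G)
    (X : Type) [TopologicalSpace X] [CompactSpace X] [Nonempty X] [MulAction G X]
    [ContinuousSMul G X] : ∃ φ ∈ stateSpace X, ∀ g : G, dualSMul X g φ = φ := by
  have : LocallyConvexSpace ℝ (WeakDual ℝ C(X, ℝ)) := WeakBilin.locallyConvexSpace
  obtain ⟨x₀⟩ := ‹Nonempty X›
  obtain ⟨⟨φ, hφ⟩, hfix⟩ := hG (WeakDual ℝ C(X, ℝ)) (stateSpace X) (isCompact_stateSpace X)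
    (convex_stateSpace X) ⟨_, evalCLM_mem_stateSpace x₀⟩
    (fun g φ => ⟨dualSMul X g φ, mapsTo_dualSMul g φ.2⟩)
    (fun φ => Subtype.ext (dualSMul_one φ.1))
    (fun g h φ => Subtype.ext (dualSMul_mul g h φ.1))
    (continuous_dualSMul.subtype_mk _)
    (fun g φ ψ t _ _ => by simp)
  exact ⟨φ, hφ, fun g => congrArg Subtype.val (hfix g)⟩

theorem AffineFixedPointProperty.exists_smulInvariant_regular_probability
    (hG : AffineFixedPointProperty G) (X : Type) [TopologicalSpace X] [CompactSpace X]
    [T2Space X] [Nonempty X] [MeasurableSpace X] [BorelSpace X] [MulAction G X]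
    [ContinuousSMul G X] :
    ∃ μ : Measure X, IsProbabilityMeasure μ ∧ μ.Regular ∧ SMulInvariantMeasure G X μ := by
  obtain ⟨φ, hφ, hfix⟩ := hG.exists_fixed_state X
  obtain ⟨μ, hμ, hreg, hint⟩ := exists_regular_probability_integral_eq hφ
  refine ⟨μ, hμ, hreg, ⟨fun g s hs => ?_⟩⟩
  have hmap : μ.map (g • ·) = μ := Measure.map_eq_self_of_integral_comp_eq (Homeomorph.smul g)
    fun f => calc
      ∫ x, f (g • x) ∂μ = dualSMul X g φ f := hint (f.comp (Homeomorph.smul g : X ≃ₜ X))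
      _ = φ f := by rw [hfix g]
      _ = ∫ x, f x ∂μ := (hint f).symm
  rw [← Measure.map_apply (measurable_const_smul g) hs, hmap]

theorem AffineFixedPointProperty.invariantMeasureProperty (hG : AffineFixedPointProperty G) :
    InvariantMeasureProperty G := by
  intro X _ _ _ _ _ _ act h1 hmul hcont
  let _ : MulAction G X := { smul := act, one_smul := h1, mul_smul := hmul }
  have : ContinuousSMul G X := ⟨hcont⟩
  obtain ⟨μ, hμ, hreg, hinv⟩ := hG.exists_smulInvariant_regular_probability X
  exact ⟨μ, hμ, hreg, fun g _ hB => hinv.measure_preimage_smul g hB⟩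

theorem InvariantMeasureProperty.affineFixedPointProperty (hG : InvariantMeasureProperty G) :
    AffineFixedPointProperty G := by
  intro E _ _ _ _ _ _ _ K hK hKconv hne act h1 hmul hcont haff
  have : CompactSpace K := isCompact_iff_compactSpace.mp hK
  have : Nonempty K := hne.to_subtype
  borelize ↥K
  obtain ⟨μ, hμ, -, hinv⟩ := hG ↥K act h1 hmul hcont
  obtain ⟨b, hb⟩ := exists_isBarycenter μ hKconv
  have hactc (g : G) : Continuous (act g) := hcont.comp (Continuous.prodMk_right g)
  refine ⟨b, fun g => hb.apply_eq_self_of_map_eq (hactc g) ?_ ?_⟩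
  · rintro x y z t ht0 ht1 hz
    obtain rfl : z = ⟨_, hKconv x.2 y.2 ht0 (by linarith) (by ring)⟩ := Subtype.ext hz
    exact haff g x y t ht0 ht1
  · ext B hB
    rw [Measure.map_apply (hactc g).measurable hB, hinv g B hB]

end

/-- For a topological group `G`, the fixed-point property for continuous affine
actions on nonempty compact convex subsets of Hausdorff locally convex real topological vector
spaces is equivalent to the existence of an invariant regular Borel probability measure for
every continuous action of `G` on a nonempty compact Hausdorff space. -/
theorem stmt_1 (G : Type) [Group G] [TopologicalSpace G] :
    (∀ (E : Type) [AddCommGroup E] [Module ℝ E] [TopologicalSpace E]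
        [IsTopologicalAddGroup E] [ContinuousSMul ℝ E] [T2Space E] [LocallyConvexSpace ℝ E]
        (K : Set E), IsCompact K → ∀ hKconv : Convex ℝ K, K.Nonempty →
        ∀ act : G → K → K,
          (∀ x, act 1 x = x) →
          (∀ g h x, act (g * h) x = act g (act h x)) →
          (Continuous fun p : G × K => act p.1 p.2) →
          (∀ (g : G) (x y : K) (t : ℝ) (ht0 : 0 ≤ t) (ht1 : t ≤ 1),
            (act g ⟨t • (x : E) + (1 - t) • (y : E),
                hKconv x.2 y.2 ht0 (by linarith) (by ring)⟩ : E)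
              = t • (act g x : E) + (1 - t) • (act g y : E)) →
          ∃ x : K, ∀ g : G, act g x = x) ↔
    (∀ (X : Type) [TopologicalSpace X] [CompactSpace X] [T2Space X] [Nonempty X]
        [MeasurableSpace X] [BorelSpace X],
        ∀ act : G → X → X,
          (∀ x, act 1 x = x) →
          (∀ g h x, act (g * h) x = act g (act h x)) →
          (Continuous fun p : G × X => act p.1 p.2) →
          ∃ μ : Measure X, IsProbabilityMeasure μ ∧ μ.Regular ∧
            ∀ (g : G) (B : Set X), MeasurableSet B → μ (act g ⁻¹' B) = μ B) :=
  ⟨AffineFixedPointProperty.invariantMeasureProperty,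
    InvariantMeasureProperty.affineFixedPointProperty⟩
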